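/- (Gyrocircle Gyrotangent Gyrolength.) Let A1, A2, A3 ∈ 𝔹 be pairwise distinct and not collinear in ℝⁿ, possessing a circumgyrocenter O ∈ 𝔹 with circumgyroradius R. Let w1, w2, w3 ∈ ℝ with M := w1 + w2 + w3 > 0 and W := w1·γ_{A1} + w2·γ_{A2} + w3·γ_{A3} ≠ 0, let P := (w1·γ_{A1}·A1 + w2·γ_{A2}·A2 + w3·γ_{A3}·A3)/W ∈ 𝔹, set K = w1w2(γ12 − 1) + w1w3(γ13 − 1) + w2w3(γ23 − 1), and assume K < 0 and M² + 2K > 0 (so P lies in the exterior of the circumgyrocircle). Let T ∈ 𝔹 be any point with ‖⊖O ⊕ T‖ = R and ⟨⊖T ⊕ P, ⊖T ⊕ O⟩ = 0 (the gyroline through P and T is gyrotangent to the circumgyrocircle at T). Then the gamma factor of ⊖P ⊕ T equals M/√(M² + 2K), and ‖⊖P ⊕ T‖ = s·√(−2K)/M; in particular, all gyrotangent gyrosegments drawn from P to the circumgyrocircle have the same gyrolength. -/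
import Mathlib


open RealInnerProductSpace

/-- Lorentz gamma factor of a vector `v` in the `s`-ball of `ℝⁿ`. -/
noncomputable def egamma {n : ℕ} (s : ℝ) (v : EuclideanSpace ℝ (Fin n)) : ℝ :=
  1 / Real.sqrt (1 - ‖v‖ ^ 2 / s ^ 2)

/-- Einstein addition on the `s`-ball of `ℝⁿ`. -/
noncomputable def eadd {n : ℕ} (s : ℝ) (u v : EuclideanSpace ℝ (Fin n)) :
    EuclideanSpace ℝ (Fin n) :=
  (1 / (1 + ⟪u, v⟫ / s ^ 2)) •
    (u + (1 / egamma s u) • v + (egamma s u / (s ^ 2 * (1 + egamma s u))) • ⟪u, v⟫ • u)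

/-- Gyroangle at vertex `X` between points `Y` and `Z`. -/
noncomputable def gyroangle {n : ℕ} (s : ℝ) (X Y Z : EuclideanSpace ℝ (Fin n)) : ℝ :=
  Real.arccos ⟪‖eadd s (-X) Y‖⁻¹ • eadd s (-X) Y, ‖eadd s (-X) Z‖⁻¹ • eadd s (-X) Z⟫

/-- Gamma factor of a real gyrodistance `d`. -/
noncomputable def gammaR (s d : ℝ) : ℝ := 1 / Real.sqrt (1 - d ^ 2 / s ^ 2)

variable {n : ℕ}

lemma inner_lt_sq {s : ℝ} (hs : 0 < s) {u v : EuclideanSpace ℝ (Fin n)}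
    (hu : ‖u‖ < s) (hv : ‖v‖ < s) : |⟪u, v⟫| < s ^ 2 := by
  have h := abs_real_inner_le_norm u v
  nlinarith [norm_nonneg u, norm_nonneg v, abs_nonneg ⟪u, v⟫]

lemma one_sub_pos {s : ℝ} (hs : 0 < s) {v : EuclideanSpace ℝ (Fin n)} (hv : ‖v‖ < s) :
    0 < 1 - ‖v‖ ^ 2 / s ^ 2 := by
  have h : ‖v‖ ^ 2 < s ^ 2 := by nlinarith [norm_nonneg v]
  have hs2 : 0 < s ^ 2 := by positivity
  rw [sub_pos, div_lt_one hs2]; exact h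

lemma one_add_inner_pos {s : ℝ} (hs : 0 < s) {u v : EuclideanSpace ℝ (Fin n)}
    (hu : ‖u‖ < s) (hv : ‖v‖ < s) : 0 < 1 + ⟪u, v⟫ / s ^ 2 := by
  have h := inner_lt_sq hs hu hv
  have hs2 : 0 < s ^ 2 := by positivity
  rw [abs_lt] at h
  have : -1 < ⟪u, v⟫ / s ^ 2 := by rw [lt_div_iff₀ hs2]; nlinarith
  linarith

lemma egamma_pos {s : ℝ} (hs : 0 < s) {v : EuclideanSpace ℝ (Fin n)} (hv : ‖v‖ < s) :
    0 < egamma s v := by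
  have h := one_sub_pos hs hv
  unfold egamma
  have := Real.sqrt_pos.mpr h
  positivity

lemma egamma_sq {s : ℝ} (hs : 0 < s) {v : EuclideanSpace ℝ (Fin n)} (hv : ‖v‖ < s) :
    (egamma s v) ^ 2 * (1 - ‖v‖ ^ 2 / s ^ 2) = 1 := by
  have h := one_sub_pos hs hv
  unfold egamma
  rw [div_pow, one_pow, Real.sq_sqrt h.le]
  have hs2 : (0:ℝ) < s ^ 2 := by positivity
  have h2 : 0 < s ^ 2 - ‖v‖ ^ 2 := by nlinarith [norm_nonneg v]
  field_simp

/-- `‖v‖²` in terms of the gamma factor. -/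
lemma normsq_eq {s : ℝ} (hs : 0 < s) {v : EuclideanSpace ℝ (Fin n)} (hv : ‖v‖ < s) :
    ‖v‖ ^ 2 = s ^ 2 - s ^ 2 / (egamma s v) ^ 2 := by
  have h := egamma_sq hs hv
  have hg := egamma_pos hs hv
  have hs2 : (s:ℝ) ^ 2 ≠ 0 := by positivity
  field_simp at h ⊢
  nlinarith [h]

lemma eadd_eq (s : ℝ) (u v : EuclideanSpace ℝ (Fin n)) :
    eadd s u v = (1 / (1 + ⟪u, v⟫ / s ^ 2)) •
      ((1 + egamma s u * ⟪u, v⟫ / (s ^ 2 * (1 + egamma s u))) • u + (1 / egamma s u) • v) := by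
  unfold eadd
  congr 1
  rw [add_smul, one_smul, smul_smul, mul_comm_div, ← mul_div_assoc]
  module

lemma norm_comb_sq (x y : ℝ) (u v : EuclideanSpace ℝ (Fin n)) :
    ‖x • u + y • v‖ ^ 2 =
      x ^ 2 * ‖u‖ ^ 2 + 2 * (x * y) * ⟪u, v⟫ + y ^ 2 * ‖v‖ ^ 2 := by
  rw [@norm_add_sq_real, real_inner_smul_left, real_inner_smul_right,
    norm_smul, norm_smul, mul_pow, mul_pow, Real.norm_eq_abs, Real.norm_eq_abs, sq_abs, sq_abs]
  ring

lemma scalar_key (s g δ β : ℝ) (hs : s ≠ 0) (hg : 0 < g) :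
    (1 + g*δ/(s^2*(1+g)))^2 * (s^2 - s^2/g^2)
      + 2*((1 + g*δ/(s^2*(1+g)))*(1/g))*δ + (1/g)^2*β
    = s^2*(1+δ/s^2)^2 - (s^2 - β)/g^2 := by
  have hg' : g ≠ 0 := ne_of_gt hg
  have hg1 : (1+g) ≠ 0 := by positivity
  field_simp
  ring

lemma scalar_key2 (a g s2 β : ℝ) (ha : a ≠ 0) (hg : g ≠ 0) (hs2 : s2 ≠ 0) :
    1 - (1/a)^2 * (s2*a^2 - (s2-β)/g^2)/s2 = (1-(s2-s2/g^2)/s2)*(1-β/s2)/a^2 := by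
  field_simp
  ring

lemma one_sub_eadd {s : ℝ} (hs : 0 < s) {u v : EuclideanSpace ℝ (Fin n)}
    (hu : ‖u‖ < s) (hv : ‖v‖ < s) :
    1 - ‖eadd s u v‖ ^ 2 / s ^ 2 =
      (1 - ‖u‖ ^ 2 / s ^ 2) * (1 - ‖v‖ ^ 2 / s ^ 2) / (1 + ⟪u, v⟫ / s ^ 2) ^ 2 := by
  have hg := egamma_pos hs hu
  have hd := one_add_inner_pos hs hu hv
  have hs' : (s:ℝ) ≠ 0 := ne_of_gt hs
  rw [eadd_eq, norm_smul, mul_pow, Real.norm_eq_abs, sq_abs, norm_comb_sq,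
    normsq_eq hs hu]
  rw [scalar_key s (egamma s u) ⟪u, v⟫ (‖v‖ ^ 2) hs' hg]
  have hd' : (s ^ 2 + ⟪u, v⟫) ≠ 0 := by
    have h2 : (0:ℝ) < s ^ 2 := by positivity
    have h4 : s ^ 2 * (1 + ⟪u, v⟫ / s ^ 2) = s ^ 2 + ⟪u, v⟫ := by field_simp
    nlinarith [mul_pos h2 hd]
  have hg' : egamma s u ≠ 0 := ne_of_gt hg
  exact scalar_key2 (1 + ⟪u, v⟫ / s ^ 2) (egamma s u) (s ^ 2) (‖v‖ ^ 2)
    (ne_of_gt hd) hg' (by positivity)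

lemma one_sub_eadd_pos {s : ℝ} (hs : 0 < s) {u v : EuclideanSpace ℝ (Fin n)}
    (hu : ‖u‖ < s) (hv : ‖v‖ < s) : 0 < 1 - ‖eadd s u v‖ ^ 2 / s ^ 2 := by
  rw [one_sub_eadd hs hu hv]
  have h1 := one_sub_pos hs hu
  have h2 := one_sub_pos hs hv
  have hd := one_add_inner_pos hs hu hv
  positivity

lemma norm_eadd_lt {s : ℝ} (hs : 0 < s) {u v : EuclideanSpace ℝ (Fin n)}
    (hu : ‖u‖ < s) (hv : ‖v‖ < s) : ‖eadd s u v‖ < s := by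
  have h := one_sub_eadd_pos hs hu hv
  have hs2 : (0:ℝ) < s ^ 2 := by positivity
  have h4 : (1 - ‖eadd s u v‖ ^ 2 / s ^ 2) * s ^ 2 = s ^ 2 - ‖eadd s u v‖ ^ 2 := by
    field_simp
  nlinarith [mul_pos h hs2, norm_nonneg (eadd s u v)]

lemma gamma_eadd {s : ℝ} (hs : 0 < s) {u v : EuclideanSpace ℝ (Fin n)}
    (hu : ‖u‖ < s) (hv : ‖v‖ < s) :
    egamma s (eadd s u v) = egamma s u * egamma s v * (1 + ⟪u, v⟫ / s ^ 2) := by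
  have h1 := one_sub_pos hs hu
  have h2 := one_sub_pos hs hv
  have hd := one_add_inner_pos hs hu hv
  unfold egamma
  rw [one_sub_eadd hs hu hv, Real.sqrt_div (by positivity), Real.sqrt_mul h1.le,
    Real.sqrt_sq hd.le]
  have s1 := Real.sqrt_pos.mpr h1
  have s2 := Real.sqrt_pos.mpr h2
  field_simp

lemma egamma_neg (s : ℝ) (u : EuclideanSpace ℝ (Fin n)) : egamma s (-u) = egamma s u := by
  unfold egamma; rw [norm_neg]

lemma gamma_eadd_neg {s : ℝ} (hs : 0 < s) {u v : EuclideanSpace ℝ (Fin n)}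
    (hu : ‖u‖ < s) (hv : ‖v‖ < s) :
    egamma s (eadd s (-u) v) = egamma s u * egamma s v * (1 - ⟪u, v⟫ / s ^ 2) := by
  rw [gamma_eadd hs (by rwa [norm_neg]) hv, egamma_neg, inner_neg_left]
  ring

lemma norm_three_sq (a b c : EuclideanSpace ℝ (Fin n)) :
    ‖a + b + c‖ ^ 2 = ‖a‖ ^ 2 + ‖b‖ ^ 2 + ‖c‖ ^ 2 + 2*⟪a,b⟫ + 2*⟪a,c⟫ + 2*⟪b,c⟫ := by
  rw [norm_add_sq_real (a+b) c, norm_add_sq_real a b, inner_add_left]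
  ring

lemma inner_smul_comb (c₁ c₂ x₁ x₂ y₁ y₂ : ℝ) (w p o : EuclideanSpace ℝ (Fin n)) :
    ⟪c₁ • (x₁ • w + y₁ • p), c₂ • (x₂ • w + y₂ • o)⟫ =
      c₁ * c₂ * (x₁*x₂*‖w‖^2 + x₁*y₂*⟪w,o⟫ + x₂*y₁*⟪w,p⟫ + y₁*y₂*⟪p,o⟫) := by
  simp only [inner_add_left, inner_add_right, real_inner_smul_left, real_inner_smul_right,
    real_inner_self_eq_norm_sq, real_inner_comm p w]
  ring

lemma pyth_identity (s g tp t2 po : ℝ) (hs : s ≠ 0) (hg : 0 < g) :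
    g^2 * ((1 - tp/s^2) * (1 - t2/s^2)) - (1 - po/s^2)
      = (g^2/s^2) * ((1 - g*tp/(s^2*(1+g))) * (1 - g*t2/(s^2*(1+g))) * (s^2 - s^2/g^2)
        - (1 - g*tp/(s^2*(1+g)))*(1/g)*t2 - (1 - g*t2/(s^2*(1+g)))*(1/g)*tp
        + (1/g)^2*po) := by
  have hg' : g ≠ 0 := ne_of_gt hg
  have hg1 : (1+g) ≠ 0 := by positivity
  field_simp
  ring

lemma pyth {s : ℝ} (hs : 0 < s) {T P O : EuclideanSpace ℝ (Fin n)}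
    (hT : ‖T‖ < s) (hP : ‖P‖ < s) (hO : ‖O‖ < s)
    (htan : ⟪eadd s (-T) P, eadd s (-T) O⟫ = 0) :
    (egamma s T)^2 * ((1 - ⟪T,P⟫/s^2) * (1 - ⟪T,O⟫/s^2)) = 1 - ⟪P,O⟫/s^2 := by
  have hg := egamma_pos hs hT
  have hg' : egamma s T ≠ 0 := ne_of_gt hg
  have hs' : s ≠ 0 := ne_of_gt hs
  have hdP := one_add_inner_pos hs (by rwa [norm_neg] : ‖-T‖ < s) hP
  have hdO := one_add_inner_pos hs (by rwa [norm_neg] : ‖-T‖ < s) hO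
  rw [inner_neg_left] at hdP hdO
  have hexp : ⟪eadd s (-T) P, eadd s (-T) O⟫ =
      (1/(1 + -⟪T,P⟫/s^2)) * (1/(1 + -⟪T,O⟫/s^2)) *
      ((1 - egamma s T*⟪T,P⟫/(s^2*(1+egamma s T))) * (1 - egamma s T*⟪T,O⟫/(s^2*(1+egamma s T))) * ‖T‖^2
        - (1 - egamma s T*⟪T,P⟫/(s^2*(1+egamma s T)))*(1/egamma s T)*⟪T,O⟫
        - (1 - egamma s T*⟪T,O⟫/(s^2*(1+egamma s T)))*(1/egamma s T)*⟪T,P⟫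
        + (1/egamma s T)^2*⟪P,O⟫) := by
    rw [eadd_eq, eadd_eq, inner_smul_comb]
    simp only [inner_neg_left, inner_neg_right, norm_neg, egamma_neg]
    ring
  rw [hexp] at htan
  have hc1 : (1/(1 + -⟪T,P⟫/s^2)) ≠ 0 := one_div_ne_zero (ne_of_gt hdP)
  have hc2 : (1/(1 + -⟪T,O⟫/s^2)) ≠ 0 := one_div_ne_zero (ne_of_gt hdO)
  have hE : (1 - egamma s T*⟪T,P⟫/(s^2*(1+egamma s T))) * (1 - egamma s T*⟪T,O⟫/(s^2*(1+egamma s T))) * ‖T‖^2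
        - (1 - egamma s T*⟪T,P⟫/(s^2*(1+egamma s T)))*(1/egamma s T)*⟪T,O⟫
        - (1 - egamma s T*⟪T,O⟫/(s^2*(1+egamma s T)))*(1/egamma s T)*⟪T,P⟫
        + (1/egamma s T)^2*⟪P,O⟫ = 0 := by
    rcases mul_eq_zero.mp htan with h | h
    · rcases mul_eq_zero.mp h with h' | h'
      · exact absurd h' hc1
      · exact absurd h' hc2
    · exact h
  rw [normsq_eq hs hT] at hE
  have hid := pyth_identity s (egamma s T) ⟪T,P⟫ ⟪T,O⟫ ⟪P,O⟫ hs' hg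
  rw [hE, mul_zero] at hid
  linarith [hid]


set_option maxHeartbeats 1000000 in
/-- **Gyrocircle Gyrotangent Gyrolength Theorem.** -/
theorem gyrocircle_gyrotangent_gyrolength {n : ℕ} (hn : 2 ≤ n) (s : ℝ) (hs : 0 < s)
    (A1 A2 A3 O P T : EuclideanSpace ℝ (Fin n))
    (hA1 : ‖A1‖ < s) (hA2 : ‖A2‖ < s) (hA3 : ‖A3‖ < s)
    (h12 : A1 ≠ A2) (h13 : A1 ≠ A3) (h23 : A2 ≠ A3)
    (hncol : ¬ Collinear ℝ ({A1, A2, A3} : Set (EuclideanSpace ℝ (Fin n))))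
    (hO : ‖O‖ < s) (R : ℝ)
    (hR1 : ‖eadd s (-O) A1‖ = R) (hR2 : ‖eadd s (-O) A2‖ = R)
    (hR3 : ‖eadd s (-O) A3‖ = R)
    (γ12 γ13 γ23 : ℝ)
    (hγ12 : γ12 = egamma s (eadd s (-A1) A2))
    (hγ13 : γ13 = egamma s (eadd s (-A1) A3))
    (hγ23 : γ23 = egamma s (eadd s (-A2) A3))
    (w1 w2 w3 M W K : ℝ)
    (hM : M = w1 + w2 + w3) (hMpos : 0 < M)
    (hW : W = w1 * egamma s A1 + w2 * egamma s A2 + w3 * egamma s A3)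
    (hWne : W ≠ 0)
    (hP : P = W⁻¹ • ((w1 * egamma s A1) • A1 + (w2 * egamma s A2) • A2 +
      (w3 * egamma s A3) • A3))
    (hPball : ‖P‖ < s)
    (hK : K = w1 * w2 * (γ12 - 1) + w1 * w3 * (γ13 - 1) + w2 * w3 * (γ23 - 1))
    (hKneg : K < 0) (hMK : M ^ 2 + 2 * K > 0)
    (hT : ‖T‖ < s) (hTcirc : ‖eadd s (-O) T‖ = R)
    (hTtan : ⟪eadd s (-T) P, eadd s (-T) O⟫ = 0) :
    egamma s (eadd s (-P) T) = M / Real.sqrt (M ^ 2 + 2 * K) ∧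
    ‖eadd s (-P) T‖ = s * Real.sqrt (-2 * K) / M := by

  have hs' : s ≠ 0 := ne_of_gt hs
  have hg1 := egamma_pos hs hA1
  have hg2 := egamma_pos hs hA2
  have hg3 := egamma_pos hs hA3
  have hg0 := egamma_pos hs hO
  have hgT := egamma_pos hs hT
  have hgP := egamma_pos hs hPball
  have hnO : ‖-O‖ < s := by rwa [norm_neg]
  have hnP : ‖-P‖ < s := by rwa [norm_neg]
  -- circumcircle gamma equalities
  have e1 : egamma s O * egamma s A1 * (1 - ⟪O,A1⟫/s^2) = egamma s (eadd s (-O) T) := by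
    rw [← gamma_eadd_neg hs hO hA1]; unfold egamma; rw [hR1, hTcirc]
  have e2 : egamma s O * egamma s A2 * (1 - ⟪O,A2⟫/s^2) = egamma s (eadd s (-O) T) := by
    rw [← gamma_eadd_neg hs hO hA2]; unfold egamma; rw [hR2, hTcirc]
  have e3 : egamma s O * egamma s A3 * (1 - ⟪O,A3⟫/s^2) = egamma s (eadd s (-O) T) := by
    rw [← gamma_eadd_neg hs hO hA3]; unfold egamma; rw [hR3, hTcirc]
  have hGd : egamma s (eadd s (-O) T) = egamma s O * egamma s T * (1 - ⟪O,T⟫/s^2) :=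
    gamma_eadd_neg hs hO hT
  have hGpos : 0 < egamma s (eadd s (-O) T) := egamma_pos hs (norm_eadd_lt hs hnO hT)
  -- inner products with O
  have hxO1 : ⟪O,A1⟫ = s^2*(egamma s O * egamma s A1 - egamma s (eadd s (-O) T))
      /(egamma s O * egamma s A1) := by
    rw [← e1]; field_simp; ring
  have hxO2 : ⟪O,A2⟫ = s^2*(egamma s O * egamma s A2 - egamma s (eadd s (-O) T))
      /(egamma s O * egamma s A2) := by
    rw [← e2]; field_simp; ring
  have hxO3 : ⟪O,A3⟫ = s^2*(egamma s O * egamma s A3 - egamma s (eadd s (-O) T))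
      /(egamma s O * egamma s A3) := by
    rw [← e3]; field_simp; ring
  -- gamma factors of the sides
  have hx12 : ⟪A1,A2⟫ = s^2*(egamma s A1 * egamma s A2 - γ12)/(egamma s A1 * egamma s A2) := by
    rw [hγ12, gamma_eadd_neg hs hA1 hA2]; field_simp; ring
  have hx13 : ⟪A1,A3⟫ = s^2*(egamma s A1 * egamma s A3 - γ13)/(egamma s A1 * egamma s A3) := by
    rw [hγ13, gamma_eadd_neg hs hA1 hA3]; field_simp; ring
  have hx23 : ⟪A2,A3⟫ = s^2*(egamma s A2 * egamma s A3 - γ23)/(egamma s A2 * egamma s A3) := by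
    rw [hγ23, gamma_eadd_neg hs hA2 hA3]; field_simp; ring
  -- expansion of ‖P‖²
  have hPsq : ‖P‖^2 = (W⁻¹)^2 * ((w1*egamma s A1)^2*‖A1‖^2 + (w2*egamma s A2)^2*‖A2‖^2
      + (w3*egamma s A3)^2*‖A3‖^2 + 2*((w1*egamma s A1)*(w2*egamma s A2))*⟪A1,A2⟫
      + 2*((w1*egamma s A1)*(w3*egamma s A3))*⟪A1,A3⟫
      + 2*((w2*egamma s A2)*(w3*egamma s A3))*⟪A2,A3⟫) := by
    rw [hP, norm_smul, mul_pow, Real.norm_eq_abs, sq_abs, norm_three_sq]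
    simp only [norm_smul, real_inner_smul_left, real_inner_smul_right, mul_pow,
      Real.norm_eq_abs, sq_abs]
    ring
  have hWne' : w1 * egamma s A1 + w2 * egamma s A2 + w3 * egamma s A3 ≠ 0 := hW ▸ hWne
  have key1 : W^2*(1-‖P‖^2/s^2) = M^2 + 2*K := by
    rw [hPsq, normsq_eq hs hA1, normsq_eq hs hA2, normsq_eq hs hA3, hx12, hx13, hx23,
      hK, hM, hW]
    field_simp
    ring
  -- expansion of ⟪P,O⟫
  have hPO : ⟪P,O⟫ = W⁻¹*((w1*egamma s A1)*⟪O,A1⟫ + (w2*egamma s A2)*⟪O,A2⟫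
      + (w3*egamma s A3)*⟪O,A3⟫) := by
    rw [hP]
    simp only [real_inner_smul_left, inner_add_left]
    rw [real_inner_comm A1 O, real_inner_comm A2 O, real_inner_comm A3 O]
  have key2 : egamma s O * (1 - ⟪P,O⟫/s^2) * W = egamma s (eadd s (-O) T) * M := by
    rw [hPO, hxO1, hxO2, hxO3, hM, hW]
    field_simp
    ring
  -- Pythagoras
  have hpyth := pyth hs hT hPball hO hTtan
  rw [real_inner_comm P T, real_inner_comm O T] at hpyth
  have hγPTd : egamma s (eadd s (-P) T) = egamma s P * egamma s T * (1 - ⟪P,T⟫/s^2) :=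
    gamma_eadd_neg hs hPball hT
  have hγPTpos : 0 < egamma s (eadd s (-P) T) := egamma_pos hs (norm_eadd_lt hs hnP hT)
  have hchain : egamma s (eadd s (-P) T) * egamma s (eadd s (-O) T)
      = egamma s P * egamma s O * (1 - ⟪P,O⟫/s^2) := by
    rw [hγPTd, hGd]
    linear_combination (egamma s P * egamma s O) * hpyth
  have hchain2 : egamma s (eadd s (-P) T) * egamma s (eadd s (-O) T) * W
      = egamma s P * (egamma s O * (1 - ⟪P,O⟫/s^2) * W) := by
    linear_combination W * hchain
  rw [key2] at hchain2
  have hPTW : egamma s (eadd s (-P) T) * W = egamma s P * M := by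
    have h' : egamma s (eadd s (-O) T) * (egamma s (eadd s (-P) T) * W)
        = egamma s (eadd s (-O) T) * (egamma s P * M) := by linear_combination hchain2
    exact mul_left_cancel₀ (ne_of_gt hGpos) h'
  have hWpos : 0 < W := by
    by_contra hcon
    push_neg at hcon
    have h1' : egamma s (eadd s (-P) T) * W ≤ 0 :=
      mul_nonpos_iff.mpr (Or.inl ⟨hγPTpos.le, hcon⟩)
    have h2' : 0 < egamma s P * M := mul_pos hgP hMpos
    linarith [hPTW ▸ h1']
  have esqP := egamma_sq hs hPball
  have hgP2 : (egamma s P)^2*(M^2+2*K) = W^2 := by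
    linear_combination (-(egamma s P)^2) * key1 + W^2 * esqP
  have hsq : (egamma s (eadd s (-P) T) * W)^2 = (egamma s P * M)^2 := by rw [hPTW]
  have hPT2 : (egamma s (eadd s (-P) T))^2*(M^2+2*K)*W^2 = M^2*W^2 := by
    linear_combination (M^2+2*K) * hsq + M^2 * hgP2
  have hPT2' : (egamma s (eadd s (-P) T))^2*(M^2+2*K) = M^2 :=
    mul_right_cancel₀ (pow_ne_zero 2 hWne) hPT2
  have hsqrtpos : 0 < Real.sqrt (M^2+2*K) := Real.sqrt_pos.mpr hMK
  have h1 : (M / Real.sqrt (M^2+2*K))^2 = M^2/(M^2+2*K) := by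
    rw [div_pow, Real.sq_sqrt hMK.le]
  have hval : egamma s (eadd s (-P) T) = M / Real.sqrt (M^2+2*K) := by
    have h2 : (egamma s (eadd s (-P) T))^2 = M^2/(M^2+2*K) := by
      rw [eq_div_iff (ne_of_gt hMK)]; exact hPT2'
    have h4 : 0 < M / Real.sqrt (M^2+2*K) := div_pos hMpos hsqrtpos
    calc egamma s (eadd s (-P) T) = Real.sqrt ((egamma s (eadd s (-P) T))^2) :=
          (Real.sqrt_sq hγPTpos.le).symm
      _ = Real.sqrt ((M / Real.sqrt (M^2+2*K))^2) := by rw [h2, h1]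
      _ = M / Real.sqrt (M^2+2*K) := Real.sqrt_sq h4.le
  refine ⟨hval, ?_⟩
  have hK' : (0:ℝ) ≤ -2*K := by linarith
  have hNsq : ‖eadd s (-P) T‖^2 = s^2 - s^2/(egamma s (eadd s (-P) T))^2 :=
    normsq_eq hs (norm_eadd_lt hs hnP hT)
  rw [hval, h1] at hNsq
  have hgoal2 : (s*Real.sqrt (-2*K)/M)^2 = s^2 - s^2/(M^2/(M^2+2*K)) := by
    rw [div_pow, mul_pow, Real.sq_sqrt hK']
    field_simp
    ring
  have h10 : 0 ≤ s*Real.sqrt (-2*K)/M := by positivity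
  calc ‖eadd s (-P) T‖ = Real.sqrt (‖eadd s (-P) T‖^2) :=
        (Real.sqrt_sq (norm_nonneg _)).symm
    _ = Real.sqrt ((s*Real.sqrt (-2*K)/M)^2) := by rw [hNsq, ← hgoal2]
    _ = s*Real.sqrt (-2*K)/M := Real.sqrt_sq h10
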